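/- Let d ≥ 1, β > d and R ≥ 1. There exist constants 0 < c ≤ C, depending only on d and β (and not on R), such that for every real L ≥ 1: c L^{−3d} ≤ Σ_{n ∈ ℤ^d, |n|_∞ ≥ L} |n|^{−4d} Σ_{n' ∈ ℤ^d, |n'|_∞ ≥ L, |n−n'|_∞ ≤ L/R} (1+|n−n'|)^{−β} ≤ C L^{−3d}. -/

import Mathlib

/-!
The inner sum lies between its diagonal term `n' = n`, which equals `1`, and
`S = ∑_{m ∈ ℤ^d} (1 + |m|)^{-β} < ∞`, uniformly in `R`; so the double sum is comparable to the
tail `∑_{|n|_∞ ≥ L} |n|^{-4d}`.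

For the upper bound, `2|n| ≥ L + |n_i|` for every `i` dominates `|n|^{-4d}` by the product
`∏_i 16 (L + |n_i|)^{-4}`, whose sum over `ℤ^d` factorises; each one-dimensional factor is
`O(L^{-3})` by telescoping against `(L + k)^{-3}`. For the lower bound, the `⌈L⌉^d` points of the
box `[⌈L⌉, 2⌈L⌉)^d` lie in the tail and have `|n|² ≤ 16 d L²`. The same product trick, with
exponent `β / d > 1` in each coordinate, gives `S < ∞`.
-/

/-- Euclidean norm of a lattice point of `ℤ^d`. -/
noncomputable def zEucNorm {d : ℕ} (n : Fin d → ℤ) : ℝ :=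
  Real.sqrt (∑ i, ((n i : ℝ)) ^ 2)

/-- ℓ∞ norm of a lattice point of `ℤ^d`. -/
noncomputable def zSupNorm {d : ℕ} (n : Fin d → ℤ) : ℝ :=
  ((Finset.univ.sup fun i => (n i).natAbs : ℕ) : ℝ)

open Finset

theorem HasSum.int_natAbs {G : Type*} [AddCommGroup G] [TopologicalSpace G]
    [IsTopologicalAddGroup G] {g : ℕ → G} {a : G} (hg : HasSum g a) :
    HasSum (fun m : ℤ => g m.natAbs) (a + (a - g 0)) := by
  have hshift : HasSum (fun n => g (n + 1)) (a - g 0) := by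
    simpa using (hasSum_nat_add_iff' 1).mpr hg
  refine hg.of_nat_of_neg_add_one (f := fun m : ℤ => g m.natAbs) ?_
  convert hshift using 3 with n
  omega

theorem HasSum.fin_pi_prod {α : Type*} {g : α → ℝ} {a : ℝ} (hg : HasSum g a) (hg0 : 0 ≤ g)
    (k : ℕ) : HasSum (fun n : Fin k → α => ∏ i, g (n i)) (a ^ k) := by
  induction k with
  | zero => simp
  | succ k ih =>
    have hprod0 : 0 ≤ fun n : Fin k → α => ∏ i, g (n i) := fun n => prod_nonneg fun i _ => hg0 _
    have hsum : Summable fun p : α × (Fin k → α) => g p.1 * ∏ i, g (p.2 i) :=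
      Summable.mul_of_nonneg (f := g) (g := fun n : Fin k → α => ∏ i, g (n i))
        hg.summable ih.summable hg0 hprod0
    have h : HasSum (fun p : α × (Fin k → α) => g p.1 * ∏ i, g (p.2 i)) (a * a ^ k) :=
      HasSum.mul (f := g) (g := fun n : Fin k → α => ∏ i, g (n i)) hg ih hsum
    rw [← (Fin.consEquiv fun _ => α).hasSum_iff, pow_succ']
    convert h using 2 with p
    simp [Fin.prod_univ_succ]

lemma Real.rpow_neg_mul_natCast {x : ℝ} (hx : 0 ≤ x) (y : ℝ) (d : ℕ) :
    x ^ (-(y * d)) = ((x ^ y)⁻¹) ^ d := by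
  rw [neg_mul_eq_neg_mul, Real.rpow_mul_natCast hx, Real.rpow_neg hx]

section SubLeft

variable {G : Type*} [AddGroup G] {f : G → ℝ}

lemma tsum_subtype_comp_sub_le (hf : Summable f) (hf0 : 0 ≤ f) (n : G) (p : G → Prop) :
    ∑' n' : {n' // p n'}, f (n - n') ≤ ∑' m, f m :=
  ((Equiv.subLeft n).summable_iff.mpr hf).tsum_subtype_le (fun n' => f (n - n')) {n' | p n'}
    (fun _ => hf0 _) |>.trans_eq ((Equiv.subLeft n).tsum_eq f)

lemma le_tsum_subtype_comp_sub (hf : Summable f) (hf0 : 0 ≤ f) {n : G} {p : G → Prop}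
    (hn : p n) : f 0 ≤ ∑' n' : {n' // p n'}, f (n - n') := by
  simpa using (((Equiv.subLeft n).summable_iff.mpr hf).subtype p).le_tsum ⟨n, hn⟩
    fun _ _ => hf0 _

end SubLeft

lemma summable_mul_of_one_le_of_le {ι : Type*} {u v : ι → ℝ} {S : ℝ} (hu : Summable u)
    (hu0 : 0 ≤ u) (hv1 : ∀ i, 1 ≤ v i) (hvS : ∀ i, v i ≤ S) :
    Summable (fun i => u i * v i) ∧ ∑' i, u i ≤ ∑' i, u i * v i ∧
      ∑' i, u i * v i ≤ S * ∑' i, u i := by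
  have hup : ∀ i, u i * v i ≤ S * u i := fun i => by
    rw [mul_comm S]; exact mul_le_mul_of_nonneg_left (hvS i) (hu0 i)
  have hlow : ∀ i, u i ≤ u i * v i := fun i => le_mul_of_one_le_right (hu0 i) (hv1 i)
  have huv : Summable fun i => u i * v i :=
    (hu.mul_left S).of_nonneg_of_le (fun i => (hu0 i).trans (hlow i)) hup
  exact ⟨huv, hu.tsum_le_tsum hlow huv,
    (huv.tsum_le_tsum hup (hu.mul_left S)).trans_eq tsum_mul_left⟩

lemma inv_pow_four_le_sub_inv_pow_three {x : ℝ} (hx : 1 ≤ x) :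
    (x ^ 4)⁻¹ ≤ 8 / 3 * ((x ^ 3)⁻¹ - ((x + 1) ^ 3)⁻¹) := by
  have hx0 : 0 < x := by linarith
  rw [inv_sub_inv (by positivity) (by positivity), ← mul_div_assoc, inv_eq_one_div,
    div_le_div_iff₀ (by positivity) (by positivity)]
  nlinarith [pow_pos hx0 3, pow_pos hx0 4, pow_pos hx0 5, pow_pos hx0 6]

lemma sum_range_inv_add_pow_four_le {a : ℝ} (ha : 1 ≤ a) (N : ℕ) :
    ∑ k ∈ range N, ((a + k) ^ 4)⁻¹ ≤ 8 / 3 * (a ^ 3)⁻¹ := by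
  set f : ℕ → ℝ := fun k => ((a + k) ^ 3)⁻¹
  calc ∑ k ∈ range N, ((a + k) ^ 4)⁻¹ ≤ ∑ k ∈ range N, 8 / 3 * (f k - f (k + 1)) := by
        refine sum_le_sum fun k _ => ?_
        have hk : 1 ≤ a + k := by linarith [k.cast_nonneg' (α := ℝ)]
        simpa [f, add_assoc] using inv_pow_four_le_sub_inv_pow_three hk
    _ = 8 / 3 * (f 0 - f N) := by rw [← mul_sum, sum_range_sub']
    _ ≤ 8 / 3 * (a ^ 3)⁻¹ := by
        have : 0 ≤ f N := by positivity
        simp only [f, Nat.cast_zero, add_zero]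
        linarith

lemma exists_hasSum_int_inv_add_natAbs_pow_four_le {a : ℝ} (ha : 1 ≤ a) :
    ∃ s ≤ 16 / 3 * (a ^ 3)⁻¹, HasSum (fun m : ℤ => ((a + m.natAbs) ^ 4)⁻¹) s := by
  have hf0 : ∀ k : ℕ, 0 ≤ ((a + k) ^ 4)⁻¹ := fun k => by positivity
  have hf := summable_of_sum_range_le hf0 (sum_range_inv_add_pow_four_le ha)
  have htsum := Real.tsum_le_of_sum_range_le hf0 (sum_range_inv_add_pow_four_le ha)
  refine ⟨_, ?_, hf.hasSum.int_natAbs (g := fun k : ℕ => ((a + k) ^ 4)⁻¹)⟩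
  linarith [hf0 0]

lemma summable_one_add_natCast_rpow_neg {s : ℝ} (hs : 1 < s) :
    Summable fun k : ℕ => (1 + (k : ℝ)) ^ (-s) := by
  have h := (summable_nat_add_iff 1).mpr (Real.summable_nat_rpow.mpr (by linarith : -s < -1))
  refine h.congr fun k => ?_
  push_cast
  ring_nf

section Norms

variable {d : ℕ} (n : Fin d → ℤ)

@[simp] lemma zSupNorm_zero : zSupNorm (0 : Fin d → ℤ) = 0 := by simp [zSupNorm]

@[simp] lemma zEucNorm_zero : zEucNorm (0 : Fin d → ℤ) = 0 := by simp [zEucNorm]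

lemma zEucNorm_nonneg : 0 ≤ zEucNorm n := Real.sqrt_nonneg _

lemma zEucNorm_sq : zEucNorm n ^ 2 = ∑ i, (n i : ℝ) ^ 2 :=
  Real.sq_sqrt (sum_nonneg fun _ _ => sq_nonneg _)

lemma abs_le_zSupNorm (i : Fin d) : |(n i : ℝ)| ≤ zSupNorm n := by
  rw [← Int.cast_abs, ← Nat.cast_natAbs, zSupNorm]
  exact Nat.cast_le.mpr (le_sup (f := fun j => (n j).natAbs) (mem_univ i))

lemma abs_le_zEucNorm (i : Fin d) : |(n i : ℝ)| ≤ zEucNorm n :=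
  Real.abs_le_sqrt (single_le_sum (f := fun j => (n j : ℝ) ^ 2) (fun _ _ => sq_nonneg _)
    (mem_univ i))

lemma zSupNorm_le_zEucNorm : zSupNorm n ≤ zEucNorm n := by
  refine sup_induction (p := fun k : ℕ => (k : ℝ) ≤ zEucNorm n) (by simpa using zEucNorm_nonneg n)
    (fun a ha b hb => by simpa [Nat.cast_max] using max_le ha hb) fun i _ => ?_
  simpa [Nat.cast_natAbs] using abs_le_zEucNorm n i

lemma zEucNorm_sq_le {M : ℝ} (hM : ∀ i, |(n i : ℝ)| ≤ M) : zEucNorm n ^ 2 ≤ d * M ^ 2 := by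
  rw [zEucNorm_sq]
  calc ∑ i, (n i : ℝ) ^ 2 ≤ ∑ _i : Fin d, M ^ 2 :=
        sum_le_sum fun i _ => sq_le_sq' (abs_le.mp (hM i)).1 (abs_le.mp (hM i)).2
    _ = d * M ^ 2 := by simp

lemma inv_pow_le_zEucNorm_rpow {M : ℝ} (hn : 0 < zEucNorm n) (hM : ∀ i, |(n i : ℝ)| ≤ M) :
    ((d ^ 2 * M ^ 4 : ℝ)⁻¹) ^ d ≤ zEucNorm n ^ (-(4 * (d : ℝ))) := by
  rw [Real.rpow_neg_mul_natCast (zEucNorm_nonneg n), Real.rpow_ofNat]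
  refine pow_le_pow_left₀ (by positivity) (inv_anti₀ (pow_pos hn 4) ?_) d
  calc zEucNorm n ^ 4 = (zEucNorm n ^ 2) ^ 2 := by ring
    _ ≤ (d * M ^ 2) ^ 2 := pow_le_pow_left₀ (sq_nonneg _) (zEucNorm_sq_le n hM) 2
    _ = d ^ 2 * M ^ 4 := by ring

end Norms

section Tail

variable {d : ℕ} {L : ℝ}

lemma zEucNorm_rpow_le_prod (hL : 0 < L) {n : Fin d → ℤ} (hn : L ≤ zSupNorm n) :
    zEucNorm n ^ (-(4 * (d : ℝ))) ≤ ∏ i, 16 * ((L + (n i).natAbs) ^ 4)⁻¹ := by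
  have hE : L ≤ zEucNorm n := hn.trans (zSupNorm_le_zEucNorm n)
  rw [Real.rpow_neg_mul_natCast (zEucNorm_nonneg n), Real.rpow_ofNat, ← Fin.prod_const]
  refine prod_le_prod (fun _ _ => inv_nonneg.mpr (pow_nonneg (zEucNorm_nonneg n) 4)) fun i _ => ?_
  have hi : L + (n i).natAbs ≤ 2 * zEucNorm n := by
    have := abs_le_zEucNorm n i
    rw [Nat.cast_natAbs, Int.cast_abs]
    linarith
  have hi0 : 0 < L + (n i).natAbs := add_pos_of_pos_of_nonneg hL (Nat.cast_nonneg _)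
  rw [← div_eq_mul_inv, le_div_iff₀ (pow_pos hi0 4), mul_comm, ← div_eq_mul_inv,
    div_le_iff₀ (pow_pos (hL.trans_le hE) 4)]
  calc (L + (n i).natAbs) ^ 4 ≤ (2 * zEucNorm n) ^ 4 := by gcongr
    _ = 16 * zEucNorm n ^ 4 := by ring

lemma exists_hasSum_zEucNorm_majorant_le (hL : 1 ≤ L) :
    ∃ s ≤ (256 / 3) ^ d * L ^ (-(3 * (d : ℝ))),
      HasSum (fun n : Fin d → ℤ => ∏ i, 16 * ((L + (n i).natAbs) ^ 4)⁻¹) s := by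
  obtain ⟨s, hs, h⟩ := exists_hasSum_int_inv_add_natAbs_pow_four_le hL
  refine ⟨_, ?_, (h.mul_left 16).fin_pi_prod (fun m => by positivity) d⟩
  rw [Real.rpow_neg_mul_natCast (by positivity), Real.rpow_ofNat, ← mul_pow]
  refine pow_le_pow_left₀ (mul_nonneg (by norm_num) (h.nonneg fun m => by positivity)) ?_ d
  linarith

lemma summable_zEucNorm_rpow (hL : 1 ≤ L) :
    Summable fun n : {n : Fin d → ℤ // L ≤ zSupNorm n} => zEucNorm n.1 ^ (-(4 * (d : ℝ))) := by
  obtain ⟨s, -, h⟩ := exists_hasSum_zEucNorm_majorant_le (d := d) hL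
  exact (h.summable.subtype _).of_nonneg_of_le (fun _ => Real.rpow_nonneg (zEucNorm_nonneg _) _)
    fun n => zEucNorm_rpow_le_prod (by linarith) n.2

lemma tsum_zEucNorm_rpow_le (hL : 1 ≤ L) :
    ∑' n : {n : Fin d → ℤ // L ≤ zSupNorm n}, zEucNorm n.1 ^ (-(4 * (d : ℝ)))
      ≤ (256 / 3) ^ d * L ^ (-(3 * (d : ℝ))) := by
  obtain ⟨s, hs, h⟩ := exists_hasSum_zEucNorm_majorant_le (d := d) hL
  have hmaj0 : ∀ n : Fin d → ℤ, 0 ≤ ∏ i, 16 * ((L + (n i).natAbs) ^ 4)⁻¹ :=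
    fun n => prod_nonneg fun _ _ => by positivity
  calc _ ≤ ∑' n : {n : Fin d → ℤ // L ≤ zSupNorm n}, ∏ i, 16 * ((L + (n.1 i).natAbs) ^ 4)⁻¹ :=
        (summable_zEucNorm_rpow hL).tsum_le_tsum (fun n => zEucNorm_rpow_le_prod (by linarith) n.2)
          (h.summable.subtype _)
    _ ≤ s := h.tsum_eq ▸ h.summable.tsum_subtype_le _ _ hmaj0
    _ ≤ _ := hs

lemma le_tsum_zEucNorm_rpow (hd : 1 ≤ d) (hL : 1 ≤ L) :
    ((256 * d ^ 2 : ℝ)⁻¹) ^ d * L ^ (-(3 * (d : ℝ)))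
      ≤ ∑' n : {n : Fin d → ℤ // L ≤ zSupNorm n}, zEucNorm n.1 ^ (-(4 * (d : ℝ))) := by
  classical
  set K := ⌈L⌉₊
  have hLK : L ≤ K := Nat.le_ceil L
  have hK2 : (K : ℝ) ≤ 2 * L := by linarith [Nat.ceil_lt_add_one (by linarith : (0 : ℝ) ≤ L)]
  set box := Fintype.piFinset fun _ : Fin d => Ico (K : ℤ) (2 * K)
  have hbox : ∀ n ∈ box, ∀ i, (K : ℝ) ≤ n i ∧ (n i : ℝ) < 2 * K := by
    intro n hn i
    exact_mod_cast mem_Ico.mp (Fintype.mem_piFinset.mp hn i)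
  have hbox_tail : ∀ n ∈ box, L ≤ zSupNorm n := fun n hn =>
    hLK.trans (((hbox n hn ⟨0, hd⟩).1.trans (le_abs_self _)).trans (abs_le_zSupNorm n _))
  have hbox_term : ∀ n ∈ box.subtype (fun n => L ≤ zSupNorm n),
      ((d ^ 2 * (4 * L) ^ 4 : ℝ)⁻¹) ^ d ≤ zEucNorm n.1 ^ (-(4 * (d : ℝ))) := by
    intro n hn
    refine inv_pow_le_zEucNorm_rpow n.1 (by linarith [n.2.trans (zSupNorm_le_zEucNorm n.1)])
      fun i => ?_
    obtain ⟨h1, h2⟩ := hbox n.1 (mem_subtype.mp hn) i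
    rw [abs_le]
    constructor <;> linarith [(K.cast_nonneg : (0 : ℝ) ≤ K)]
  have hcard : (box.subtype (fun n => L ≤ zSupNorm n)).card = K ^ d := by
    rw [card_subtype, filter_true_of_mem hbox_tail, Fintype.card_piFinset]
    simp only [Int.card_Ico, prod_const, card_univ, Fintype.card_fin]
    congr 1
    omega
  calc ((256 * d ^ 2 : ℝ)⁻¹) ^ d * L ^ (-(3 * (d : ℝ)))
      ≤ (K : ℝ) ^ d * ((d ^ 2 * (4 * L) ^ 4 : ℝ)⁻¹) ^ d := by
        rw [Real.rpow_neg_mul_natCast (by linarith), Real.rpow_ofNat, ← mul_pow, ← mul_pow]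
        refine pow_le_pow_left₀ (by positivity) ?_ d
        calc (256 * d ^ 2 : ℝ)⁻¹ * (L ^ 3)⁻¹ = L * (d ^ 2 * (4 * L) ^ 4)⁻¹ := by
              field_simp
              ring
          _ ≤ K * (d ^ 2 * (4 * L) ^ 4)⁻¹ := by gcongr
    _ ≤ ∑ n ∈ box.subtype (fun n => L ≤ zSupNorm n), zEucNorm n.1 ^ (-(4 * (d : ℝ))) := by
        simpa [hcard] using card_nsmul_le_sum _ _ _ hbox_term
    _ ≤ _ := (summable_zEucNorm_rpow hL).sum_le_tsum _
          fun _ _ => Real.rpow_nonneg (zEucNorm_nonneg _) _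

end Tail

lemma summable_one_add_zEucNorm_rpow_neg {d : ℕ} (hd : 1 ≤ d) {β : ℝ} (hβ : (d : ℝ) < β) :
    Summable fun m : Fin d → ℤ => (1 + zEucNorm m) ^ (-β) := by
  have hd0 : (0 : ℝ) < d := by exact_mod_cast hd
  have hg := (summable_one_add_natCast_rpow_neg ((one_lt_div hd0).mpr hβ)).hasSum.int_natAbs
  have hprod := (hg.fin_pi_prod (fun m => by positivity) d).summable
  have hE : ∀ m : Fin d → ℤ, 0 ≤ 1 + zEucNorm m := fun m => by linarith [zEucNorm_nonneg m]
  refine hprod.of_nonneg_of_le (fun m => Real.rpow_nonneg (hE m) _) fun m => ?_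
  rw [show -β = -(β / d) * d by field_simp, Real.rpow_mul_natCast (hE m), ← Fin.prod_const]
  refine prod_le_prod (fun _ _ => Real.rpow_nonneg (hE m) _) fun i _ => ?_
  refine Real.rpow_le_rpow_of_nonpos (by positivity) ?_
    (neg_nonpos.mpr (div_pos (hd0.trans hβ) hd0).le)
  have := abs_le_zEucNorm m i
  rw [Nat.cast_natAbs, Int.cast_abs]
  linarith

/-- two-sided near-diagonal estimate
`c L^{-3d} ≤ Σ_{|n|_∞ ≥ L} |n|^{-4d} Σ_{|n'|_∞ ≥ L, |n-n'|_∞ ≤ L/R}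
  (1+|n-n'|)^{-β} ≤ C L^{-3d}`, with constants independent of `R ≥ 1`. -/
theorem neardiagonal_two_sided_estimate (d : ℕ) (hd : 1 ≤ d) (β : ℝ)
    (hβ : (d : ℝ) < β) :
    ∃ c C : ℝ, 0 < c ∧ c ≤ C ∧ ∀ R : ℝ, 1 ≤ R → ∀ L : ℝ, 1 ≤ L →
      Summable (fun n : {n : Fin d → ℤ // L ≤ zSupNorm n} =>
        zEucNorm n.1 ^ (-(4 * (d : ℝ))) *
          ∑' n' : {n' : Fin d → ℤ // L ≤ zSupNorm n' ∧ zSupNorm (n.1 - n') ≤ L / R},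
            (1 + zEucNorm (n.1 - n'.1)) ^ (-β)) ∧
      c * L ^ (-(3 * (d : ℝ))) ≤
        (∑' n : {n : Fin d → ℤ // L ≤ zSupNorm n},
          zEucNorm n.1 ^ (-(4 * (d : ℝ))) *
            ∑' n' : {n' : Fin d → ℤ // L ≤ zSupNorm n' ∧ zSupNorm (n.1 - n') ≤ L / R},
              (1 + zEucNorm (n.1 - n'.1)) ^ (-β)) ∧
      (∑' n : {n : Fin d → ℤ // L ≤ zSupNorm n},
        zEucNorm n.1 ^ (-(4 * (d : ℝ))) *
          ∑' n' : {n' : Fin d → ℤ // L ≤ zSupNorm n' ∧ zSupNorm (n.1 - n') ≤ L / R},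
            (1 + zEucNorm (n.1 - n'.1)) ^ (-β)) ≤
        C * L ^ (-(3 * (d : ℝ))) := by
  set f : (Fin d → ℤ) → ℝ := fun m => (1 + zEucNorm m) ^ (-β)
  have hf : Summable f := summable_one_add_zEucNorm_rpow_neg hd hβ
  have hf0 : 0 ≤ f := fun m => Real.rpow_nonneg (by linarith [zEucNorm_nonneg m]) _
  have hf_zero : f 0 = 1 := by simp [f]
  have hS : 1 ≤ ∑' m, f m := hf_zero ▸ hf.le_tsum 0 fun m _ => hf0 m
  have hd2 : (1 : ℝ) ≤ 256 * d ^ 2 := by nlinarith [(Nat.one_le_cast.mpr hd : (1 : ℝ) ≤ d)]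
  refine ⟨((256 * d ^ 2 : ℝ)⁻¹) ^ d, (∑' m, f m) * (256 / 3) ^ d, by positivity, ?_,
    fun R hR L hL => ?_⟩
  · calc ((256 * d ^ 2 : ℝ)⁻¹) ^ d ≤ 1 := pow_le_one₀ (by positivity) (inv_le_one_of_one_le₀ hd2)
      _ ≤ _ := one_le_mul_of_one_le_of_one_le hS (one_le_pow₀ (by norm_num))
  obtain ⟨hsum, hlow, hup⟩ := summable_mul_of_one_le_of_le (summable_zEucNorm_rpow hL)
    (fun n => Real.rpow_nonneg (zEucNorm_nonneg _) _)
    (fun n => hf_zero ▸ le_tsum_subtype_comp_sub hf hf0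
      (p := fun n' => L ≤ zSupNorm n' ∧ zSupNorm (n.1 - n') ≤ L / R) ⟨n.2, by rw [sub_self, zSupNorm_zero]; positivity⟩)
    (fun n => tsum_subtype_comp_sub_le hf hf0 n.1 _)
  refine ⟨hsum, (le_tsum_zEucNorm_rpow hd hL).trans hlow, hup.trans ?_⟩
  rw [mul_assoc]
  exact mul_le_mul_of_nonneg_left (tsum_zEucNorm_rpow_le hL) (by linarith)
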